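/- arXiv:2601.07993 — 4 statements merged into one kernel-verified Lean document; each statement's English description precedes it below -/
import Mathlib

section
/- Define the linear map 𝒜 : ℝ³ → ℝ³ by 𝒜(φ, γ, τ) = (φ − (3/2)·γ, −γ, −τ). Then 𝒜 is an involution (𝒜 ∘ 𝒜 is the identity) and 𝒜 maps the polyhedron Ω onto itself, i.e., 𝒜(Ω) = Ω. -/
open MeasureTheory Set

/-- A bivariate copula, viewed as a real function of two variables whose defining
properties are required on the unit square. -/
def IsCopula (C : ℝ → ℝ → ℝ) : Prop :=
  (∀ v ∈ Icc (0:ℝ) 1, C 0 v = 0) ∧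
  (∀ u ∈ Icc (0:ℝ) 1, C u 0 = 0) ∧
  (∀ u ∈ Icc (0:ℝ) 1, C u 1 = u) ∧
  (∀ v ∈ Icc (0:ℝ) 1, C 1 v = v) ∧
  (∀ u₁ u₂ v₁ v₂ : ℝ, 0 ≤ u₁ → u₁ ≤ u₂ → u₂ ≤ 1 → 0 ≤ v₁ → v₁ ≤ v₂ → v₂ ≤ 1 →
    0 ≤ C u₂ v₂ - C u₂ v₁ - C u₁ v₂ + C u₁ v₁)

/-- Spearman's rho: ρ(C) = 12·∫₀¹∫₀¹ C(u,v) du dv − 3. -/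
noncomputable def spearmanRho (C : ℝ → ℝ → ℝ) : ℝ :=
  12 * (∫ u in (0:ℝ)..1, ∫ v in (0:ℝ)..1, C u v) - 3

/-- Spearman's footrule: φ(C) = 6·∫₀¹ C(u,u) du − 2. -/
noncomputable def footrule (C : ℝ → ℝ → ℝ) : ℝ :=
  6 * (∫ u in (0:ℝ)..1, C u u) - 2

/-- Gini's gamma: γ(C) = 4·∫₀¹ C(u,u) du + 4·∫₀¹ C(u,1−u) du − 2. -/
noncomputable def giniGamma (C : ℝ → ℝ → ℝ) : ℝ :=
  4 * (∫ u in (0:ℝ)..1, C u u) + 4 * (∫ u in (0:ℝ)..1, C u (1 - u)) - 2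

/-- Blomqvist's beta: β(C) = 4·C(1/2,1/2) − 1. -/
noncomputable def blomqvistBeta (C : ℝ → ℝ → ℝ) : ℝ :=
  4 * C (1/2) (1/2) - 1

/-- A copula measure of a copula `C`: a probability measure on the plane with
μ([0,u]×[0,v]) = C(u,v) for u,v in the unit interval. -/
def IsCopulaMeasure (C : ℝ → ℝ → ℝ) (μ : Measure (ℝ × ℝ)) : Prop :=
  IsProbabilityMeasure μ ∧
  ∀ u ∈ Icc (0:ℝ) 1, ∀ v ∈ Icc (0:ℝ) 1,
    μ (Icc 0 u ×ˢ Icc 0 v) = ENNReal.ofReal (C u v)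

/-- Kendall's tau expressed via a copula measure μ of C:
τ(C) = 4·∫_{[0,1]²} C dμ − 1. -/
noncomputable def kendallTauInt (C : ℝ → ℝ → ℝ) (μ : Measure (ℝ × ℝ)) : ℝ :=
  4 * (∫ p in Icc (0:ℝ) 1 ×ˢ Icc (0:ℝ) 1, C p.1 p.2 ∂μ) - 1

/-- `B` is the ordinal sum of the copulas `Bk k` with respect to the pairwise disjoint
open subintervals `(a k, b k)` of `[0,1]`. -/
def IsOrdinalSum {n : ℕ} (a b : Fin n → ℝ) (Bk : Fin n → ℝ → ℝ → ℝ)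
    (B : ℝ → ℝ → ℝ) : Prop :=
  (∀ k, 0 ≤ a k ∧ a k ≤ b k ∧ b k ≤ 1) ∧
  (Pairwise fun i j => Disjoint (Ioo (a i) (b i)) (Ioo (a j) (b j))) ∧
  (∀ k, ∀ u ∈ Icc (a k) (b k), ∀ v ∈ Icc (a k) (b k),
    B u v = a k + (b k - a k) * Bk k ((u - a k) / (b k - a k)) ((v - a k) / (b k - a k))) ∧
  (∀ u ∈ Icc (0:ℝ) 1, ∀ v ∈ Icc (0:ℝ) 1,
    (∀ k, ¬(u ∈ Icc (a k) (b k) ∧ v ∈ Icc (a k) (b k))) → B u v = min u v)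

/-- The polyhedron Ω in ℝ³ (coordinates (φ, γ, τ)). -/
def Omega : Set (ℝ × ℝ × ℝ) :=
  {p | -2 * p.1 ≤ 1 ∧
       -8 * p.1 + 6 * p.2.1 ≤ 1 ∧
       -2 * p.1 + 3 * p.2.1 ≤ 1 ∧
       4 * p.1 - 3 * p.2.2 ≤ 1 ∧
       -2 * p.1 + 3 * p.2.2 ≤ 1 ∧
       -2 * p.1 + 3 * p.2.1 - 3 * p.2.2 ≤ 1 ∧
       4 * p.1 - 6 * p.2.1 + 3 * p.2.2 ≤ 1}

/-- The map 𝒜(φ, γ, τ) = (φ − (3/2)γ, −γ, −τ). -/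
noncomputable def Amap : ℝ × ℝ × ℝ → ℝ × ℝ × ℝ :=
  fun p => (p.1 - (3/2) * p.2.1, -p.2.1, -p.2.2)

theorem Function.Involutive.image_eq_of_mapsTo {α : Type*} {f : α → α} (hf : f.Involutive)
    {s : Set α} (h : MapsTo f s s) : f '' s = s :=
  (LeftInvOn.surjOn (fun x _ => hf x) h).image_eq_of_mapsTo h

theorem Amap_involutive : Function.Involutive Amap := by
  rintro ⟨φ, γ, τ⟩
  simp [Amap]

/-- Precomposition with `Amap` permutes the seven linear constraints of `Omega` as
(1 3)(4 7)(5 6), fixing the second. -/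
theorem Amap_mapsTo_Omega : MapsTo Amap Omega Omega := by
  rintro ⟨φ, γ, τ⟩ ⟨h₁, h₂, h₃, h₄, h₅, h₆, h₇⟩
  simp only [Omega, Amap, mem_ofPred_eq] at *
  exact ⟨by linarith, by linarith, by linarith, by linarith, by linarith, by linarith,
    by linarith⟩

/-- 𝒜 is an involution and maps the polyhedron Ω onto itself. -/
theorem Amap_involutive_and_maps_Omega_onto_itself :
    Amap ∘ Amap = id ∧ Amap '' Omega = Omega :=
  ⟨Amap_involutive.comp_self, Amap_involutive.image_eq_of_mapsTo Amap_mapsTo_Omega⟩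
end

section
/- For every triple (φ₀, γ₀, τ₀) ∈ ℝ³ with −1/2 ≤ φ₀ ≤ 1, (4/3)·φ₀ − 1/3 ≤ γ₀ ≤ min{ 2·φ₀, (2/3)·φ₀ + 1/3 }, and τ₀ = (4/3)·φ₀ − 1/3, there exists a copula C together with a copula measure μ of C such that φ(C) = φ₀, γ(C) = γ₀, and 4·∫_{[0,1]²} C dμ − 1 = τ₀. -/
open MeasureTheory Set

/-!
The witnesses are shuffles of Min. For `0 ≤ c ≤ a ≤ 1/2 ≤ 1 - a ≤ b ≤ 1`, push Lebesgue measure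
on `(0, 1)` forward along the graph of the map that reverses `[0, c]` and `[a, b]` and fixes the
rest of `[0, 1]`. With `S = c² + (b - a)²` the resulting copula has `φ = 1 - 3S/2`,
`τ = 1 - 2S` and `γ = 4a(1 - a) - S`, so `τ = (4φ - 1)/3` holds automatically. Given `φ₀`, this
fixes `S`; then `γ₀` fixes `a(1 - a) = (γ₀ + S)/4 ∈ [0, 1/4]`, and the bounds on `γ₀` say
precisely that `(1 - 2a)² ≤ S ≤ a² + (1 - a)²`, the range of `c² + (b - a)²` over the admissible
`b` and `c`.
-/

section GraphMeasure

noncomputable def graphMeasure (g : ℝ → ℝ) : Measure (ℝ × ℝ) :=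
  (volume.restrict (Ioo 0 1)).map fun t => (t, g t)

variable {g : ℝ → ℝ}

lemma isProbabilityMeasure_graphMeasure (hg : Measurable g) :
    IsProbabilityMeasure (graphMeasure g) := by
  have : IsProbabilityMeasure (volume.restrict (Ioo (0:ℝ) 1)) :=
    ⟨by rw [Measure.restrict_apply_univ, Real.volume_Ioo]; norm_num⟩
  exact Measure.isProbabilityMeasure_map (measurable_id.prodMk hg).aemeasurable

lemma graphMeasure_Icc_prod_Icc (hg : Measurable g) (hg₀ : ∀ t ∈ Ioo 0 1, 0 ≤ g t) (u v : ℝ) :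
    graphMeasure g (Icc 0 u ×ˢ Icc 0 v) = volume (Ioo 0 1 ∩ Iic u ∩ g ⁻¹' Iic v) := by
  have hT : Measurable fun t => (t, g t) := measurable_id.prodMk hg
  rw [graphMeasure, Measure.map_apply hT (measurableSet_Icc.prod measurableSet_Icc),
    Measure.restrict_apply (hT (measurableSet_Icc.prod measurableSet_Icc))]
  congr 1
  ext t
  simp only [mem_inter_iff, mem_preimage, mem_prod, mem_Icc, mem_Ioo, mem_Iic]
  constructor
  · rintro ⟨⟨⟨-, htu⟩, -, htv⟩, ht⟩
    exact ⟨⟨ht, htu⟩, htv⟩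
  · rintro ⟨⟨ht, htu⟩, htv⟩
    exact ⟨⟨⟨ht.1.le, htu⟩, hg₀ t ht, htv⟩, ht⟩

lemma setIntegral_unitSquare_graphMeasure (hg : Measurable g)
    (hg₀₁ : MapsTo g (Ioo 0 1) (Icc 0 1)) {F : ℝ × ℝ → ℝ} (hF : Measurable F) :
    ∫ p in Icc (0:ℝ) 1 ×ˢ Icc (0:ℝ) 1, F p ∂graphMeasure g = ∫ t in (0:ℝ)..1, F (t, g t) := by
  have hT : Measurable fun t => (t, g t) := measurable_id.prodMk hg
  have hS : MeasurableSet (Icc (0:ℝ) 1 ×ˢ Icc (0:ℝ) 1) :=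
    measurableSet_Icc.prod measurableSet_Icc
  have hsupp : Ioo (0:ℝ) 1 ⊆ (fun t => (t, g t)) ⁻¹' (Icc 0 1 ×ˢ Icc 0 1) :=
    fun t ht => ⟨⟨ht.1.le, ht.2.le⟩, hg₀₁ ht⟩
  rw [graphMeasure, Measure.restrict_map hT hS, Measure.restrict_restrict (hT hS),
    inter_eq_self_of_subset_right hsupp, integral_map hT.aemeasurable hF.aestronglyMeasurable,
    intervalIntegral.integral_of_le zero_le_one, integral_Ioc_eq_integral_Ioo]

end GraphMeasure

lemma IsCopulaMeasure.two_increasing {C : ℝ → ℝ → ℝ} {μ : Measure (ℝ × ℝ)}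
    (hμ : IsCopulaMeasure C μ) (hC : ∀ u ∈ Icc (0:ℝ) 1, ∀ v ∈ Icc (0:ℝ) 1, 0 ≤ C u v)
    {u₁ u₂ v₁ v₂ : ℝ} (hu₁ : 0 ≤ u₁) (hu : u₁ ≤ u₂) (hu₂ : u₂ ≤ 1)
    (hv₁ : 0 ≤ v₁) (hv : v₁ ≤ v₂) (hv₂ : v₂ ≤ 1) :
    0 ≤ C u₂ v₂ - C u₂ v₁ - C u₁ v₂ + C u₁ v₁ := by
  have hrect := hμ.2
  set R : ℝ → ℝ → Set (ℝ × ℝ) := fun u v => Icc 0 u ×ˢ Icc 0 v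
  have hinter : R u₂ v₁ ∩ R u₁ v₂ = R u₁ v₁ := by
    simp only [R, prod_inter_prod, Icc_inter_Icc, max_self, min_eq_right hu, min_eq_left hv]
  have hunion : R u₂ v₁ ∪ R u₁ v₂ ⊆ R u₂ v₂ :=
    union_subset (prod_mono_right (Icc_subset_Icc_right hv))
      (prod_mono_left (Icc_subset_Icc_right hu))
  have key : μ (R u₂ v₁) + μ (R u₁ v₂) ≤ μ (R u₂ v₂) + μ (R u₁ v₁) := by
    rw [← measure_union_add_inter _ (measurableSet_Icc.prod measurableSet_Icc), hinter]
    exact add_le_add_left (measure_mono hunion) _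
  have hu₁' : u₁ ∈ Icc (0:ℝ) 1 := ⟨hu₁, hu.trans hu₂⟩
  have hu₂' : u₂ ∈ Icc (0:ℝ) 1 := ⟨hu₁.trans hu, hu₂⟩
  have hv₁' : v₁ ∈ Icc (0:ℝ) 1 := ⟨hv₁, hv.trans hv₂⟩
  have hv₂' : v₂ ∈ Icc (0:ℝ) 1 := ⟨hv₁.trans hv, hv₂⟩
  simp only [R, hrect _ hu₁' _ hv₁', hrect _ hu₁' _ hv₂', hrect _ hu₂' _ hv₁',
    hrect _ hu₂' _ hv₂'] at key
  rw [← ENNReal.ofReal_add (hC _ hu₂' _ hv₁') (hC _ hu₁' _ hv₂'),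
    ← ENNReal.ofReal_add (hC _ hu₂' _ hv₂') (hC _ hu₁' _ hv₁'),
    ENNReal.ofReal_le_ofReal_iff (add_nonneg (hC _ hu₂' _ hv₂') (hC _ hu₁' _ hv₁'))] at key
  linarith

section PiecewiseAffine

variable {f : ℝ → ℝ} {p q r s : ℝ}

lemma intervalIntegrable_of_eqOn_Ioo_affine (hpq : p ≤ q)
    (hf : EqOn f (fun x => r * x + s) (Ioo p q)) : IntervalIntegrable f volume p q :=
  ((continuous_const.mul continuous_id).add continuous_const |>.intervalIntegrable p q).congr_uIoo
    (by rw [uIoo_of_le hpq]; exact hf.symm)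

lemma integral_of_eqOn_Ioo_affine (hpq : p ≤ q) (hf : EqOn f (fun x => r * x + s) (Ioo p q)) :
    ∫ x in p..q, f x = r * (q ^ 2 - p ^ 2) / 2 + s * (q - p) := by
  rw [intervalIntegral.integral_congr_Ioo_of_le hpq hf,
    intervalIntegral.integral_add (intervalIntegral.intervalIntegrable_id.const_mul r)
      intervalIntegrable_const,
    intervalIntegral.integral_const_mul, integral_id, intervalIntegral.integral_const,
    smul_eq_mul]
  ring

end PiecewiseAffine

lemma volume_eq_of_Ioo_subset_of_subset_Icc {E : Set ℝ} {p q : ℝ} (h₁ : Ioo p q ⊆ E)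
    (h₂ : E ⊆ Icc p q) : volume E = ENNReal.ofReal (max (q - p) 0) := by
  rw [ENNReal.ofReal_max, ENNReal.ofReal_zero, max_eq_left zero_le]
  exact le_antisymm (Real.volume_Icc ▸ measure_mono h₂) (Real.volume_Ioo ▸ measure_mono h₁)

noncomputable def shuffleMap (a b c : ℝ) (t : ℝ) : ℝ :=
  if t < c then c - t else if a ≤ t ∧ t ≤ b then a + b - t else t

/-- The volume of `{t ∈ (0, 1) | t ≤ u, shuffleMap a b c t ≤ v}`: the four summands are the
lengths of its parts in the blocks `[0, c)`, `[c, a)`, `[a, b]` and `(b, 1]`. -/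
noncomputable def shuffleCopula (a b c : ℝ) (u v : ℝ) : ℝ :=
  max (min c u - max (c - v) 0) 0 + max (min a (min u v) - c) 0
    + max (min b u - max (a + b - v) a) 0 + max (min u v - b) 0

structure ShuffleParams (a b c : ℝ) : Prop where
  nonneg : 0 ≤ c
  le_left : c ≤ a
  le_half : a ≤ 1 / 2
  one_sub_le : 1 - a ≤ b
  le_one : b ≤ 1

section Shuffle

variable {a b c : ℝ}

lemma measurable_shuffleMap : Measurable (shuffleMap a b c) :=
  Measurable.ite measurableSet_Iio (by fun_prop)
    (Measurable.ite measurableSet_Icc (by fun_prop) (by fun_prop))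

lemma shuffleCopula_nonneg (u v : ℝ) : 0 ≤ shuffleCopula a b c u v := by
  unfold shuffleCopula
  positivity

lemma continuous_shuffleCopula : Continuous fun p : ℝ × ℝ => shuffleCopula a b c p.1 p.2 := by
  unfold shuffleCopula
  fun_prop

namespace ShuffleParams

variable (h : ShuffleParams a b c)
include h

lemma mapsTo_shuffleMap : MapsTo (shuffleMap a b c) (Ioo 0 1) (Icc 0 1) := by
  obtain ⟨hc, hca, ha, hab, hb⟩ := h
  intro t ⟨ht₀, ht₁⟩
  simp only [shuffleMap, mem_Icc]
  grind

lemma volume_sublevel {u v : ℝ} (hu : u ≤ 1) :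
    volume (Ioo 0 1 ∩ Iic u ∩ shuffleMap a b c ⁻¹' Iic v)
      = ENNReal.ofReal (shuffleCopula a b c u v) := by
  obtain ⟨hc, hca, ha, hab, hb⟩ := h
  set E := Ioo 0 1 ∩ Iic u ∩ shuffleMap a b c ⁻¹' Iic v
  rw [← measure_inter_add_sdiff E (measurableSet_Iio (a := c)),
    ← measure_inter_add_sdiff (E \ Iio c) (measurableSet_Iio (a := a)),
    ← measure_inter_add_sdiff ((E \ Iio c) \ Iio a) (measurableSet_Iic (a := b))]
  rw [volume_eq_of_Ioo_subset_of_subset_Icc (p := max (c - v) 0) (q := min c u),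
    volume_eq_of_Ioo_subset_of_subset_Icc (p := c) (q := min a (min u v)),
    volume_eq_of_Ioo_subset_of_subset_Icc (p := max (a + b - v) a) (q := min b u),
    volume_eq_of_Ioo_subset_of_subset_Icc (p := b) (q := min u v),
    ← ENNReal.ofReal_add, ← ENNReal.ofReal_add, ← ENNReal.ofReal_add, shuffleCopula]
  · congr 1
    ring
  all_goals first
    | positivity
    | intro t ht
      simp only [E, mem_inter_iff, mem_sdiff, mem_Ioo, mem_Icc, mem_Iic, mem_Iio, mem_preimage,
        shuffleMap, max_lt_iff, lt_min_iff, max_le_iff, le_min_iff] at ht ⊢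
      grind

lemma isCopulaMeasure :
    IsCopulaMeasure (shuffleCopula a b c) (graphMeasure (shuffleMap a b c)) :=
  ⟨isProbabilityMeasure_graphMeasure measurable_shuffleMap, fun u hu v _ => by
    rw [graphMeasure_Icc_prod_Icc measurable_shuffleMap (fun t ht => (h.mapsTo_shuffleMap ht).1),
      h.volume_sublevel hu.2]⟩

lemma isCopula : IsCopula (shuffleCopula a b c) := by
  refine ⟨fun v ⟨hv₀, _⟩ => ?_, fun u ⟨hu₀, _⟩ => ?_, fun u ⟨hu₀, hu₁⟩ => ?_,
    fun v ⟨hv₀, hv₁⟩ => ?_, fun _ _ _ _ => h.isCopulaMeasure.two_increasing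
      (fun u _ v _ => shuffleCopula_nonneg u v)⟩
  all_goals
    obtain ⟨hc, hca, ha, hab, hb⟩ := h
    unfold shuffleCopula
    grind

lemma integral_diagonal :
    ∫ u in (0:ℝ)..1, shuffleCopula a b c u u = 1 / 2 - (c ^ 2 + (b - a) ^ 2) / 4 := by
  obtain ⟨hc, hca, ha, hab, hb⟩ := h
  set D := fun u => shuffleCopula a b c u u
  have hD : ∀ p q, IntervalIntegrable D volume p q := fun p q =>
    (by unfold D shuffleCopula; fun_prop : Continuous D).intervalIntegrable p q
  obtain ⟨h₁, h₂, h₃, h₄, h₅, h₆⟩ :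
      EqOn D (fun u => 0 * u + 0) (Ioo 0 (c / 2)) ∧
      EqOn D (fun u => 2 * u + -c) (Ioo (c / 2) c) ∧
      EqOn D (fun u => 1 * u + 0) (Ioo c a) ∧
      EqOn D (fun u => 0 * u + a) (Ioo a ((a + b) / 2)) ∧
      EqOn D (fun u => 2 * u + -b) (Ioo ((a + b) / 2) b) ∧
      EqOn D (fun u => 1 * u + 0) (Ioo b 1) := by
    refine ⟨?_, ?_, ?_, ?_, ?_, ?_⟩ <;> intro u ⟨hu₀, hu₁⟩ <;> simp only [D, shuffleCopula] <;>
      grind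
  rw [← intervalIntegral.integral_add_adjacent_intervals (hD 0 (c / 2)) (hD _ 1),
    ← intervalIntegral.integral_add_adjacent_intervals (hD (c / 2) c) (hD _ 1),
    ← intervalIntegral.integral_add_adjacent_intervals (hD c a) (hD _ 1),
    ← intervalIntegral.integral_add_adjacent_intervals (hD a ((a + b) / 2)) (hD _ 1),
    ← intervalIntegral.integral_add_adjacent_intervals (hD ((a + b) / 2) b) (hD _ 1),
    integral_of_eqOn_Ioo_affine (by linarith) h₁, integral_of_eqOn_Ioo_affine (by linarith) h₂,
    integral_of_eqOn_Ioo_affine hca h₃, integral_of_eqOn_Ioo_affine (by linarith) h₄,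
    integral_of_eqOn_Ioo_affine (by linarith) h₅, integral_of_eqOn_Ioo_affine hb h₆]
  ring

lemma integral_antidiagonal :
    ∫ u in (0:ℝ)..1, shuffleCopula a b c u (1 - u) = a * (1 - a) := by
  obtain ⟨hc, hca, ha, hab, hb⟩ := h
  set A := fun u => shuffleCopula a b c u (1 - u)
  have hA : ∀ p q, IntervalIntegrable A volume p q := fun p q =>
    (by unfold A shuffleCopula; fun_prop : Continuous A).intervalIntegrable p q
  obtain ⟨h₁, h₂, h₃⟩ : EqOn A (fun u => 1 * u + 0) (Ioo 0 a) ∧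
      EqOn A (fun u => 0 * u + a) (Ioo a (1 - a)) ∧
      EqOn A (fun u => -1 * u + 1) (Ioo (1 - a) 1) := by
    refine ⟨?_, ?_, ?_⟩ <;> intro u ⟨hu₀, hu₁⟩ <;> simp only [A, shuffleCopula] <;> grind
  rw [← intervalIntegral.integral_add_adjacent_intervals (hA 0 a) (hA _ 1),
    ← intervalIntegral.integral_add_adjacent_intervals (hA a (1 - a)) (hA _ 1),
    integral_of_eqOn_Ioo_affine (by linarith) h₁, integral_of_eqOn_Ioo_affine (by linarith) h₂,
    integral_of_eqOn_Ioo_affine (by linarith) h₃]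
  ring

lemma integral_on_graph :
    ∫ t in (0:ℝ)..1, shuffleCopula a b c t (shuffleMap a b c t)
      = (a ^ 2 - c ^ 2) / 2 + a * (b - a) + (1 - b ^ 2) / 2 := by
  obtain ⟨hc, hca, ha, hab, hb⟩ := h
  set K := fun t => shuffleCopula a b c t (shuffleMap a b c t)
  obtain ⟨h₁, h₂, h₃, h₄⟩ : EqOn K (fun t => 0 * t + 0) (Ioo 0 c) ∧
      EqOn K (fun t => 1 * t + 0) (Ioo c a) ∧ EqOn K (fun t => 0 * t + a) (Ioo a b) ∧
      EqOn K (fun t => 1 * t + 0) (Ioo b 1) := by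
    refine ⟨?_, ?_, ?_, ?_⟩ <;> intro t ⟨ht₀, ht₁⟩ <;> simp only [K, shuffleCopula, shuffleMap] <;>
      grind
  have hab' : a ≤ b := by linarith
  have i₁ := intervalIntegrable_of_eqOn_Ioo_affine hc h₁
  have i₂ := intervalIntegrable_of_eqOn_Ioo_affine hca h₂
  have i₃ := intervalIntegrable_of_eqOn_Ioo_affine hab' h₃
  have i₄ := intervalIntegrable_of_eqOn_Ioo_affine hb h₄
  rw [← intervalIntegral.integral_add_adjacent_intervals i₁ (i₂.trans (i₃.trans i₄)),
    ← intervalIntegral.integral_add_adjacent_intervals i₂ (i₃.trans i₄),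
    ← intervalIntegral.integral_add_adjacent_intervals i₃ i₄,
    integral_of_eqOn_Ioo_affine hc h₁, integral_of_eqOn_Ioo_affine hca h₂,
    integral_of_eqOn_Ioo_affine hab' h₃, integral_of_eqOn_Ioo_affine hb h₄]
  ring

lemma footrule_eq : footrule (shuffleCopula a b c) = 1 - 3 / 2 * (c ^ 2 + (b - a) ^ 2) := by
  rw [footrule, h.integral_diagonal]
  ring

lemma giniGamma_eq :
    giniGamma (shuffleCopula a b c) = 4 * (a * (1 - a)) - (c ^ 2 + (b - a) ^ 2) := by
  rw [giniGamma, h.integral_diagonal, h.integral_antidiagonal]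
  ring

lemma kendallTauInt_eq :
    kendallTauInt (shuffleCopula a b c) (graphMeasure (shuffleMap a b c))
      = 1 - 2 * (c ^ 2 + (b - a) ^ 2) := by
  rw [kendallTauInt, setIntegral_unitSquare_graphMeasure measurable_shuffleMap h.mapsTo_shuffleMap
    continuous_shuffleCopula.measurable, h.integral_on_graph]
  ring

end ShuffleParams

end Shuffle

lemma exists_mul_one_sub_eq {A : ℝ} (h₀ : 0 ≤ A) (h₁ : A ≤ 1 / 4) :
    ∃ a, 0 ≤ a ∧ a ≤ 1 / 2 ∧ a * (1 - a) = A := by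
  have hsq := Real.sq_sqrt (by linarith : 0 ≤ 1 - 4 * A)
  have hle : √(1 - 4 * A) ≤ 1 := Real.sqrt_le_one.mpr (by linarith)
  refine ⟨(1 - √(1 - 4 * A)) / 2, by linarith, by linarith [Real.sqrt_nonneg (1 - 4 * A)], ?_⟩
  linear_combination (-1 / 4 : ℝ) * hsq

lemma exists_shuffleParams {a S : ℝ} (ha₀ : 0 ≤ a) (ha : a ≤ 1 / 2)
    (hS₀ : (1 - 2 * a) ^ 2 ≤ S) (hS₁ : S ≤ a ^ 2 + (1 - a) ^ 2) :
    ∃ b c, ShuffleParams a b c ∧ c ^ 2 + (b - a) ^ 2 = S := by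
  have hS : 0 ≤ S := (sq_nonneg _).trans hS₀
  rcases le_total (a + √S) 1 with h | h
  · have : 1 - 2 * a ≤ √S := (Real.le_sqrt (by linarith) hS).mpr hS₀
    refine ⟨a + √S, 0, ⟨le_rfl, ha₀, ha, by linarith, h⟩, ?_⟩
    rw [add_sub_cancel_left, Real.sq_sqrt hS]
    ring
  · have : (1 - a) ^ 2 ≤ S := (Real.le_sqrt (by linarith) hS).mp (by linarith)
    refine ⟨1, √(S - (1 - a) ^ 2),
      ⟨Real.sqrt_nonneg _, (Real.sqrt_le_left ha₀).mpr (by linarith), ha, by linarith, le_rfl⟩, ?_⟩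
    rw [Real.sq_sqrt (by linarith)]
    ring

theorem exists_copula_face_F4_general (φ₀ γ₀ τ₀ : ℝ)
    (h3 : (4/3) * φ₀ - 1/3 ≤ γ₀) (h4 : γ₀ ≤ min (2 * φ₀) ((2/3) * φ₀ + 1/3))
    (h5 : τ₀ = (4/3) * φ₀ - 1/3) :
    ∃ (C : ℝ → ℝ → ℝ) (μ : Measure (ℝ × ℝ)), IsCopula C ∧ IsCopulaMeasure C μ ∧
      footrule C = φ₀ ∧ giniGamma C = γ₀ ∧ kendallTauInt C μ = τ₀ := by
  obtain ⟨h4a, h4b⟩ := le_min_iff.mp h4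
  set S := 2 * (1 - φ₀) / 3 with hS
  obtain ⟨a, ha₀, ha, haS⟩ :=
    exists_mul_one_sub_eq (A := (γ₀ + S) / 4) (by linarith) (by linarith)
  obtain ⟨b, c, hp, hbc⟩ := exists_shuffleParams ha₀ ha (S := S) (by nlinarith) (by nlinarith)
  refine ⟨_, _, hp.isCopula, hp.isCopulaMeasure, ?_, ?_, ?_⟩
  · rw [hp.footrule_eq, hbc]
    ring
  · rw [hp.giniGamma_eq, hbc, haS]
    ring
  · rw [hp.kendallTauInt_eq, hbc, h5]
    ring

/-- Every point of the face F₄ is attained. -/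
theorem exists_copula_face_F4 (φ₀ γ₀ τ₀ : ℝ)
    (h1 : -(1/2) ≤ φ₀) (h2 : φ₀ ≤ 1)
    (h3 : (4/3) * φ₀ - 1/3 ≤ γ₀) (h4 : γ₀ ≤ min (2 * φ₀) ((2/3) * φ₀ + 1/3))
    (h5 : τ₀ = (4/3) * φ₀ - 1/3) :
    ∃ (C : ℝ → ℝ → ℝ) (μ : Measure (ℝ × ℝ)), IsCopula C ∧ IsCopulaMeasure C μ ∧
      footrule C = φ₀ ∧ giniGamma C = γ₀ ∧ kendallTauInt C μ = τ₀ :=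
  exists_copula_face_F4_general φ₀ γ₀ τ₀ h3 h4 h5
end

section
/- For every triple (φ₀, γ₀, τ₀) ∈ ℝ³ with −1/2 ≤ φ₀ ≤ 1, (4/3)·φ₀ − 1/3 ≤ γ₀ ≤ φ₀, and τ₀ = −(4/3)·φ₀ + 2·γ₀ + 1/3, there exists a copula C together with a copula measure μ of C such that φ(C) = φ₀, γ(C) = γ₀, and 4·∫_{[0,1]²} C dμ − 1 = τ₀. -/
open MeasureTheory Set

noncomputable def Cop (a th : ℝ) (u v : ℝ) : ℝ :=
  a * max 0 (u + v - 1) +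
    (1 - a) * (max 0 (min u (v - th)) + max 0 (min (u - (1 - th)) v))

lemma minmod (p₁ p₂ q₁ q₂ : ℝ) (hp : p₁ ≤ p₂) (hq : q₁ ≤ q₂) :
    0 ≤ min p₂ q₂ - min p₂ q₁ - min p₁ q₂ + min p₁ q₁ := by
  simp only [min_def]; split_ifs <;> linarith

lemma inc1 (x₁ x₂ y₁ y₂ : ℝ) (hx : x₁ ≤ x₂) (hy : y₁ ≤ y₂) :
    0 ≤ max 0 (min x₂ y₂) - max 0 (min x₂ y₁) - max 0 (min x₁ y₂) + max 0 (min x₁ y₁) := by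
  simp only [max_min_distrib_left]
  exact minmod _ _ _ _ (max_le_max le_rfl hx) (max_le_max le_rfl hy)

lemma inc2 (x₁ x₂ y₁ y₂ : ℝ) (hx : x₁ ≤ x₂) (hy : y₁ ≤ y₂) :
    0 ≤ max 0 (x₂ + y₂ - 1) - max 0 (x₂ + y₁ - 1) - max 0 (x₁ + y₂ - 1) + max 0 (x₁ + y₁ - 1) := by
  simp only [max_def]; split_ifs <;> linarith

lemma cop_isCopula {a th : ℝ} (ha0 : 0 ≤ a) (ha1 : a ≤ 1) (ht0 : 0 ≤ th) (ht1 : th ≤ 1/2) :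
    IsCopula (Cop a th) := by
  refine ⟨?_, ?_, ?_, ?_, ?_⟩
  · intro v hv
    have h1 : max 0 (0 + v - 1) = 0 := max_eq_left (by linarith [hv.2])
    have h2 : max 0 (min 0 (v - th)) = 0 := max_eq_left (min_le_left _ _)
    have h3 : max 0 (min (0 - (1 - th)) v) = 0 :=
      max_eq_left ((min_le_left _ _).trans (by linarith))
    rw [Cop, h1, h2, h3]; ring
  · intro u hu
    have h1 : max 0 (u + 0 - 1) = 0 := max_eq_left (by linarith [hu.2])
    have h2 : max 0 (min u (0 - th)) = 0 := max_eq_left ((min_le_right _ _).trans (by linarith))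
    have h3 : max 0 (min (u - (1 - th)) 0) = 0 := max_eq_left (min_le_right _ _)
    rw [Cop, h1, h2, h3]; ring
  · intro u hu
    have h1 : max 0 (u + 1 - 1) = u := by rw [max_eq_right (by linarith [hu.1])]; ring
    have h2 : max 0 (min u (1 - th)) = min u (1 - th) :=
      max_eq_right (le_min hu.1 (by linarith))
    have h3 : min (u - (1 - th)) 1 = u - (1 - th) := min_eq_left (by linarith [hu.2])
    rw [Cop, h1, h2, h3]
    rcases le_total u (1 - th) with h | h
    · rw [min_eq_left h, max_eq_left (by linarith)]; ring
    · rw [min_eq_right h, max_eq_right (by linarith)]; ring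
  · intro v hv
    have h1 : max 0 (1 + v - 1) = v := by rw [max_eq_right (by linarith [hv.1])]; ring
    have h2 : min 1 (v - th) = v - th := min_eq_right (by linarith [hv.2])
    have h3 : max 0 (min (1 - (1 - th)) v) = min th v := by
      rw [show (1:ℝ) - (1 - th) = th by ring]
      exact max_eq_right (le_min ht0 hv.1)
    rw [Cop, h1, h2, h3]
    rcases le_total v th with h | h
    · rw [max_eq_left (by linarith), min_eq_right h]; ring
    · rw [max_eq_right (by linarith), min_eq_left h]; ring
  · intro u₁ u₂ v₁ v₂ _ hu hu2 _ hv hv2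
    have A := inc2 u₁ u₂ v₁ v₂ hu hv
    have B := inc1 u₁ u₂ (v₁ - th) (v₂ - th) hu (by linarith)
    have D := inc1 (u₁ - (1 - th)) (u₂ - (1 - th)) v₁ v₂ (by linarith) hv
    simp only [Cop]
    nlinarith [mul_nonneg ha0 A, mul_nonneg (by linarith : (0:ℝ) ≤ 1 - a) (by linarith [B, D] : (0:ℝ) ≤ (max 0 (min u₂ (v₂ - th)) + max 0 (min (u₂ - (1-th)) v₂)) - (max 0 (min u₂ (v₁ - th)) + max 0 (min (u₂ - (1-th)) v₁)) - (max 0 (min u₁ (v₂ - th)) + max 0 (min (u₁ - (1-th)) v₂)) + (max 0 (min u₁ (v₁ - th)) + max 0 (min (u₁ - (1-th)) v₁)))]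


lemma lin_int (a b c : ℝ) : ∫ t in a..b, (t - c) = (b - c)^2/2 - (a - c)^2/2 := by
  rw [intervalIntegral.integral_sub intervalIntegral.intervalIntegrable_id
    (intervalIntegrable_const), integral_id, intervalIntegral.integral_const]
  simp only [smul_eq_mul, smul_zero]; ring

lemma lin_int' (a b c : ℝ) : ∫ t in a..b, (c - t) = (a - c)^2/2 - (b - c)^2/2 := by
  rw [intervalIntegral.integral_sub intervalIntegrable_const
    intervalIntegral.intervalIntegrable_id, integral_id, intervalIntegral.integral_const]
  simp only [smul_eq_mul, smul_zero]; ring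

lemma ramp_int (a b c : ℝ) (hac : a ≤ c) (hcb : c ≤ b) :
    ∫ t in a..b, max 0 (t - c) = (b - c) ^ 2 / 2 := by
  have hi : ∀ x y : ℝ, IntervalIntegrable (fun t => max 0 (t - c)) volume x y := fun x y =>
    Continuous.intervalIntegrable (by fun_prop) x y
  rw [← intervalIntegral.integral_add_adjacent_intervals (hi a c) (hi c b)]
  have e1 : (∫ t in a..c, max 0 (t - c)) = ∫ t in a..c, (0:ℝ) := by
    apply intervalIntegral.integral_congr; intro t ht
    rw [uIcc_of_le hac, mem_Icc] at ht
    show max 0 (t - c) = 0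
    exact max_eq_left (by linarith [ht.2])
  have e2 : (∫ t in c..b, max 0 (t - c)) = ∫ t in c..b, (t - c) := by
    apply intervalIntegral.integral_congr; intro t ht
    rw [uIcc_of_le hcb, mem_Icc] at ht
    show max 0 (t - c) = t - c
    exact max_eq_right (by linarith [ht.1])
  rw [e1, e2, lin_int, intervalIntegral.integral_const]
  simp only [smul_eq_mul, smul_zero]; ring

lemma ramp2_int (a b c : ℝ) (hac : 2 * a ≤ c) (hcb : c ≤ 2 * b) :
    ∫ t in a..b, max 0 (2 * t - c) = (b - c / 2) ^ 2 := by
  have hi : ∀ x y : ℝ, IntervalIntegrable (fun t => max 0 (2 * t - c)) volume x y := fun x y =>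
    Continuous.intervalIntegrable (by fun_prop) x y
  have hac' : a ≤ c / 2 := by linarith
  have hcb' : c / 2 ≤ b := by linarith
  rw [← intervalIntegral.integral_add_adjacent_intervals (hi a (c/2)) (hi (c/2) b)]
  have e1 : (∫ t in a..(c/2), max 0 (2 * t - c)) = ∫ t in a..(c/2), (0:ℝ) := by
    apply intervalIntegral.integral_congr; intro t ht
    rw [uIcc_of_le hac', mem_Icc] at ht
    show max 0 (2 * t - c) = 0
    exact max_eq_left (by linarith [ht.2])
  have e2 : (∫ t in (c/2)..b, max 0 (2 * t - c)) = ∫ t in (c/2)..b, (2 * (t - c/2)) := by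
    apply intervalIntegral.integral_congr; intro t ht
    rw [uIcc_of_le hcb', mem_Icc] at ht
    show max 0 (2 * t - c) = 2 * (t - c/2)
    rw [max_eq_right (by linarith [ht.1])]; ring
  rw [e1, e2, intervalIntegral.integral_const_mul, lin_int, intervalIntegral.integral_const]
  simp only [smul_eq_mul, smul_zero]; ring

lemma tent1_int (c : ℝ) (h0 : 0 ≤ c) (h1 : c ≤ 1) :
    ∫ t in (0:ℝ)..1, max 0 (min t (c - t)) = c ^ 2 / 4 := by
  have hi : ∀ x y : ℝ, IntervalIntegrable (fun t => max 0 (min t (c - t))) volume x y :=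
    fun x y => Continuous.intervalIntegrable (by fun_prop) x y
  rw [← intervalIntegral.integral_add_adjacent_intervals (hi 0 c) (hi c 1),
    ← intervalIntegral.integral_add_adjacent_intervals (hi 0 (c/2)) (hi (c/2) c)]
  have e1 : (∫ t in (0:ℝ)..(c/2), max 0 (min t (c - t))) = ∫ t in (0:ℝ)..(c/2), t := by
    apply intervalIntegral.integral_congr; intro t ht
    rw [uIcc_of_le (by linarith), mem_Icc] at ht
    show max 0 (min t (c - t)) = t
    rw [min_eq_left (by linarith [ht.2]), max_eq_right ht.1]
  have e2 : (∫ t in (c/2)..c, max 0 (min t (c - t))) = ∫ t in (c/2)..c, (c - t) := by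
    apply intervalIntegral.integral_congr; intro t ht
    rw [uIcc_of_le (by linarith), mem_Icc] at ht
    show max 0 (min t (c - t)) = c - t
    rw [min_eq_right (by linarith [ht.1]), max_eq_right (by linarith [ht.2])]
  have e3 : (∫ t in c..1, max 0 (min t (c - t))) = ∫ t in c..1, (0:ℝ) := by
    apply intervalIntegral.integral_congr; intro t ht
    rw [uIcc_of_le h1, mem_Icc] at ht
    show max 0 (min t (c - t)) = 0
    exact max_eq_left ((min_le_right _ _).trans (by linarith [ht.1]))
  rw [e1, e2, e3, lin_int', integral_id, intervalIntegral.integral_const]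
  simp only [smul_eq_mul, smul_zero]; ring

lemma tent2_int (c : ℝ) (h0 : 0 ≤ c) (h1 : c ≤ 1) :
    ∫ t in (0:ℝ)..1, max 0 (min (t - c) (1 - t)) = (1 - c) ^ 2 / 4 := by
  have key := intervalIntegral.integral_comp_sub_left (a := (0:ℝ)) (b := 1)
    (fun x => max 0 (min x ((1 - c) - x))) 1
  simp only [sub_zero, sub_self] at key
  have h2 : (∫ t in (0:ℝ)..1, max 0 (min (t - c) (1 - t)))
      = ∫ t in (0:ℝ)..1, max 0 (min (1 - t) ((1 - c) - (1 - t))) := by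
    apply intervalIntegral.integral_congr; intro t _
    show max 0 (min (t - c) (1 - t)) = max 0 (min (1 - t) ((1 - c) - (1 - t)))
    rw [min_comm]; congr 1
    ring
  rw [h2, key, tent1_int (1 - c) (by linarith) (by linarith)]

variable {a th : ℝ}

lemma diag_int (ha0 : 0 ≤ a) (ha1 : a ≤ 1) (ht0 : 0 ≤ th) (ht1 : th ≤ 1/2) :
    ∫ t in (0:ℝ)..1, Cop a th t t = a / 4 + (1 - a) * (((1-th)^2 + th^2) / 2) := by
  have e : (∫ t in (0:ℝ)..1, Cop a th t t)
      = ∫ t in (0:ℝ)..1, (a * max 0 (2*t - 1) + (1 - a) * (max 0 (t - th) + max 0 (t - (1 - th)))) := by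
    apply intervalIntegral.integral_congr; intro t _
    show Cop a th t t = _
    rw [Cop, min_eq_right (by linarith), min_eq_left (by linarith),
      show t + t - 1 = 2*t - 1 by ring]
  rw [e, intervalIntegral.integral_add (by apply Continuous.intervalIntegrable; fun_prop)
      (by apply Continuous.intervalIntegrable; fun_prop),
    intervalIntegral.integral_const_mul, intervalIntegral.integral_const_mul,
    intervalIntegral.integral_add (by apply Continuous.intervalIntegrable; fun_prop)
      (by apply Continuous.intervalIntegrable; fun_prop),
    ramp2_int 0 1 1 (by norm_num) (by norm_num),
    ramp_int 0 1 th ht0 (by linarith), ramp_int 0 1 (1-th) (by linarith) (by linarith)]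
  ring

lemma antidiag_int (ha0 : 0 ≤ a) (ha1 : a ≤ 1) (ht0 : 0 ≤ th) (ht1 : th ≤ 1/2) :
    ∫ t in (0:ℝ)..1, Cop a th t (1 - t) = (1 - a) * (((1-th)^2 + th^2) / 4) := by
  have e : (∫ t in (0:ℝ)..1, Cop a th t (1 - t))
      = ∫ t in (0:ℝ)..1, ((1 - a) * (max 0 (min t ((1 - th) - t)) + max 0 (min (t - (1 - th)) (1 - t)))) := by
    apply intervalIntegral.integral_congr; intro t _
    show Cop a th t (1 - t) = _
    rw [Cop, show t + (1 - t) - 1 = 0 by ring, max_self,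
      show 1 - t - th = (1 - th) - t by ring]
    ring
  rw [e, intervalIntegral.integral_const_mul,
    intervalIntegral.integral_add (by apply Continuous.intervalIntegrable; fun_prop)
      (by apply Continuous.intervalIntegrable; fun_prop),
    tent1_int (1 - th) (by linarith) (by linarith), tent2_int (1 - th) (by linarith) (by linarith)]
  ring_nf

lemma shift1_int (ha0 : 0 ≤ a) (ha1 : a ≤ 1) (ht0 : 0 ≤ th) (ht1 : th ≤ 1/2) :
    ∫ t in (0:ℝ)..(1 - th), Cop a th t (t + th)
      = a * ((1-th)^2/4) + (1 - a) * ((1-th)^2/2) := by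
  have e : (∫ t in (0:ℝ)..(1 - th), Cop a th t (t + th))
      = ∫ t in (0:ℝ)..(1 - th), (a * max 0 (2*t - (1 - th)) + (1 - a) * t) := by
    apply intervalIntegral.integral_congr; intro t ht
    rw [uIcc_of_le (by linarith), mem_Icc] at ht
    show Cop a th t (t + th) = _
    have A : max 0 (min t (t + th - th)) = t := by
      rw [show t + th - th = t by ring, min_self]; exact max_eq_right ht.1
    have B : max 0 (min (t - (1 - th)) (t + th)) = 0 :=
      max_eq_left ((min_le_left _ _).trans (by linarith [ht.2]))
    rw [Cop, A, B, show t + (t + th) - 1 = 2*t - (1 - th) by ring]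
    ring
  rw [e, intervalIntegral.integral_add (by apply Continuous.intervalIntegrable; fun_prop)
      (by apply Continuous.intervalIntegrable; fun_prop),
    intervalIntegral.integral_const_mul, intervalIntegral.integral_const_mul,
    ramp2_int 0 (1-th) (1-th) (by linarith) (by linarith), integral_id]
  ring

lemma shift2_int (ha0 : 0 ≤ a) (ha1 : a ≤ 1) (ht0 : 0 ≤ th) (ht1 : th ≤ 1/2) :
    ∫ t in (1 - th)..1, Cop a th t (t + th - 1)
      = a * (th^2/4) + (1 - a) * (th^2/2) := by
  have e : (∫ t in (1 - th)..1, Cop a th t (t + th - 1))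
      = ∫ t in (1 - th)..1, (a * max 0 (2*t - (2 - th)) + (1 - a) * (t - (1 - th))) := by
    apply intervalIntegral.integral_congr; intro t ht
    rw [uIcc_of_le (by linarith), mem_Icc] at ht
    show Cop a th t (t + th - 1) = _
    have A : max 0 (min t (t + th - 1 - th)) = 0 :=
      max_eq_left ((min_le_right _ _).trans (by linarith [ht.2]))
    have B : max 0 (min (t - (1 - th)) (t + th - 1)) = t - (1 - th) := by
      rw [show t + th - 1 = t - (1 - th) by ring, min_self]
      exact max_eq_right (by linarith [ht.1])
    rw [Cop, A, B, show t + (t + th - 1) - 1 = 2*t - (2 - th) by ring]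
    ring
  rw [e, intervalIntegral.integral_add (by apply Continuous.intervalIntegrable; fun_prop)
      (by apply Continuous.intervalIntegrable; fun_prop),
    intervalIntegral.integral_const_mul, intervalIntegral.integral_const_mul,
    ramp2_int (1-th) 1 (2-th) (by linarith) (by linarith), lin_int]
  ring

noncomputable def gmap (th t : ℝ) : ℝ := if t ≤ 1 - th then t + th else t + th - 1

lemma gmap_meas (th : ℝ) : Measurable (gmap th) :=
  Measurable.ite (measurableSet_le measurable_id measurable_const) (by fun_prop) (by fun_prop)

noncomputable def muW : Measure (ℝ × ℝ) :=
  Measure.map (fun t => (t, 1 - t)) (volume.restrict (Icc 0 1))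

noncomputable def muS (th : ℝ) : Measure (ℝ × ℝ) :=
  Measure.map (fun t => (t, gmap th t)) (volume.restrict (Icc 0 1))

noncomputable def Mu (a th : ℝ) : Measure (ℝ × ℝ) :=
  ENNReal.ofReal a • muW + ENNReal.ofReal (1 - a) • muS th

lemma mapW_meas : Measurable (fun t : ℝ => (t, 1 - t)) := by fun_prop

lemma mapS_meas (th : ℝ) : Measurable (fun t : ℝ => (t, gmap th t)) :=
  measurable_id.prodMk (gmap_meas th)

lemma ofReal_max0 (x : ℝ) : ENNReal.ofReal (max 0 x) = ENNReal.ofReal x := by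
  rcases le_total x 0 with h | h
  · rw [max_eq_left h, ENNReal.ofReal_zero, ENNReal.ofReal_eq_zero.mpr h]
  · rw [max_eq_right h]

lemma sq_meas : MeasurableSet (Icc (0:ℝ) 1 ×ˢ Icc (0:ℝ) 1) :=
  measurableSet_Icc.prod measurableSet_Icc

lemma muW_univ : muW univ = 1 := by
  rw [muW, Measure.map_apply mapW_meas MeasurableSet.univ, preimage_univ,
    Measure.restrict_apply_univ, Real.volume_Icc]
  norm_num

lemma muS_univ (th : ℝ) : muS th univ = 1 := by
  rw [muS, Measure.map_apply (mapS_meas th) MeasurableSet.univ, preimage_univ,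
    Measure.restrict_apply_univ, Real.volume_Icc]
  norm_num

lemma muW_rect {u v : ℝ} (hu : u ∈ Icc (0:ℝ) 1) (hv : v ∈ Icc (0:ℝ) 1) :
    muW (Icc 0 u ×ˢ Icc 0 v) = ENNReal.ofReal (max 0 (u + v - 1)) := by
  rw [muW, Measure.map_apply mapW_meas (measurableSet_Icc.prod measurableSet_Icc),
    Measure.restrict_apply ((measurableSet_Icc.prod measurableSet_Icc).preimage mapW_meas)]
  have hset : (fun t : ℝ => (t, 1 - t)) ⁻¹' (Icc 0 u ×ˢ Icc 0 v) ∩ Icc 0 1 = Icc (1 - v) u := by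
    ext t
    simp only [mem_inter_iff, mem_preimage, mem_prod, mem_Icc]
    constructor
    · rintro ⟨⟨⟨h1, h2⟩, h3, h4⟩, h5, h6⟩
      exact ⟨by linarith, h2⟩
    · rintro ⟨h1, h2⟩
      refine ⟨⟨⟨?_, h2⟩, ?_, ?_⟩, ?_, ?_⟩ <;> linarith [hu.1, hu.2, hv.1, hv.2]
  rw [hset, Real.volume_Icc, ofReal_max0]
  congr 1
  ring

lemma muS_rect {th u v : ℝ} (ht0 : 0 ≤ th) (ht1 : th ≤ 1/2)
    (hu : u ∈ Icc (0:ℝ) 1) (hv : v ∈ Icc (0:ℝ) 1) :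
    muS th (Icc 0 u ×ˢ Icc 0 v)
      = ENNReal.ofReal (max 0 (min u (v - th))) + ENNReal.ofReal (max 0 (min (u - (1 - th)) v)) := by
  rw [muS, Measure.map_apply (mapS_meas th) (measurableSet_Icc.prod measurableSet_Icc),
    Measure.restrict_apply ((measurableSet_Icc.prod measurableSet_Icc).preimage (mapS_meas th))]
  have hset : (fun t : ℝ => (t, gmap th t)) ⁻¹' (Icc 0 u ×ˢ Icc 0 v) ∩ Icc 0 1
      = Icc 0 (min (min u (1 - th)) (v - th)) ∪ Ioc (1 - th) (min u (v + 1 - th)) := by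
    ext t
    simp only [mem_inter_iff, mem_preimage, mem_prod, mem_Icc, mem_union, mem_Ioc,
      le_min_iff, min_le_iff]
    constructor
    · rintro ⟨⟨⟨h1, h2⟩, h3, h4⟩, h5, h6⟩
      by_cases hc : t ≤ 1 - th
      · rw [gmap, if_pos hc] at h3 h4
        exact Or.inl ⟨h1, ⟨h2, hc⟩, by linarith⟩
      · rw [gmap, if_neg hc] at h3 h4
        push_neg at hc
        exact Or.inr ⟨hc, h2, by linarith⟩
    · rintro (⟨h1, ⟨h2, h3⟩, h4⟩ | ⟨h1, h2, h3⟩)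
      · have hg : gmap th t = t + th := by rw [gmap, if_pos h3]
        refine ⟨⟨⟨h1, h2⟩, ?_, ?_⟩, h1, by linarith⟩ <;> rw [hg] <;> linarith
      · have hg : gmap th t = t + th - 1 := by rw [gmap, if_neg (by linarith)]
        refine ⟨⟨⟨by linarith, h2⟩, ?_, ?_⟩, by linarith, by linarith [hu.2]⟩ <;>
          rw [hg] <;> linarith
  have hdisj : Disjoint (Icc (0:ℝ) (min (min u (1 - th)) (v - th)))
      (Ioc (1 - th) (min u (v + 1 - th))) := by
    apply Set.disjoint_left.mpr
    intro x hx hx2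
    have := hx.2
    have h2 := hx2.1
    simp only [le_min_iff] at this
    linarith [this.1.2]
  rw [hset, measure_union hdisj measurableSet_Ioc, Real.volume_Icc, Real.volume_Ioc]
  congr 1
  · rw [ofReal_max0, sub_zero]
    congr 1
    rw [min_assoc, min_eq_right (by linarith [hv.2] : v - th ≤ 1 - th)]
  · rw [ofReal_max0]
    congr 1
    rcases le_total u (v + 1 - th) with h | h
    · rw [min_eq_left h, min_eq_left (by linarith)]
    · rw [min_eq_right h, min_eq_right (by linarith)]
      ring

lemma Mu_prob {a th : ℝ} (ha0 : 0 ≤ a) (ha1 : a ≤ 1) : IsProbabilityMeasure (Mu a th) := by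
  constructor
  rw [Mu, Measure.add_apply, Measure.smul_apply, Measure.smul_apply, muW_univ, muS_univ,
    smul_eq_mul, smul_eq_mul, mul_one, mul_one, ← ENNReal.ofReal_add ha0 (by linarith)]
  norm_num

lemma Mu_isCopulaMeasure {a th : ℝ} (ha0 : 0 ≤ a) (ha1 : a ≤ 1) (ht0 : 0 ≤ th) (ht1 : th ≤ 1/2) :
    IsCopulaMeasure (Cop a th) (Mu a th) := by
  refine ⟨Mu_prob ha0 ha1, fun u hu v hv => ?_⟩
  have m1 : (0:ℝ) ≤ max 0 (u + v - 1) := le_max_left _ _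
  have m2 : (0:ℝ) ≤ max 0 (min u (v - th)) := le_max_left _ _
  have m3 : (0:ℝ) ≤ max 0 (min (u - (1 - th)) v) := le_max_left _ _
  rw [Mu, Measure.add_apply, Measure.smul_apply, Measure.smul_apply, muW_rect hu hv,
    muS_rect ht0 ht1 hu hv, smul_eq_mul, smul_eq_mul, ← ENNReal.ofReal_add m2 m3,
    ← ENNReal.ofReal_mul ha0, ← ENNReal.ofReal_mul (by linarith : (0:ℝ) ≤ 1 - a),
    ← ENNReal.ofReal_add (mul_nonneg ha0 m1)
      (mul_nonneg (by linarith) (add_nonneg m2 m3)), Cop]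

lemma cop_cont (a th : ℝ) : Continuous fun p : ℝ × ℝ => Cop a th p.1 p.2 := by
  unfold Cop; fun_prop

section maps
variable {φ : ℝ → ℝ × ℝ} {f : ℝ × ℝ → ℝ}

lemma map_setInt (hφ : Measurable φ)
    (hmap : ∀ t ∈ Icc (0:ℝ) 1, φ t ∈ Icc (0:ℝ) 1 ×ˢ Icc (0:ℝ) 1)
    (hf : Continuous f) :
    ∫ p in Icc (0:ℝ) 1 ×ˢ Icc (0:ℝ) 1, f p ∂(Measure.map φ (volume.restrict (Icc 0 1)))
      = ∫ t in Icc (0:ℝ) 1, f (φ t) := by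
  have hsub : Icc (0:ℝ) 1 ⊆ φ ⁻¹' (Icc (0:ℝ) 1 ×ˢ Icc (0:ℝ) 1) := fun t ht => hmap t ht
  rw [setIntegral_map sq_meas hf.aestronglyMeasurable hφ.aemeasurable,
    Measure.restrict_restrict (sq_meas.preimage hφ),
    inter_eq_self_of_subset_right hsub]

lemma map_integrableOn (hφ : Measurable φ)
    (hmap : ∀ t ∈ Icc (0:ℝ) 1, φ t ∈ Icc (0:ℝ) 1 ×ˢ Icc (0:ℝ) 1)
    (hf : Continuous f) :
    IntegrableOn f (Icc (0:ℝ) 1 ×ˢ Icc (0:ℝ) 1)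
      (Measure.map φ (volume.restrict (Icc 0 1))) := by
  unfold IntegrableOn
  rw [Measure.restrict_map hφ sq_meas]
  refine (integrable_map_measure hf.aestronglyMeasurable hφ.aemeasurable).mpr ?_
  have hsub : Icc (0:ℝ) 1 ⊆ φ ⁻¹' (Icc (0:ℝ) 1 ×ˢ Icc (0:ℝ) 1) := fun t ht => hmap t ht
  rw [Measure.restrict_restrict (sq_meas.preimage hφ),
    inter_eq_self_of_subset_right hsub]
  obtain ⟨M, hM⟩ := (isCompact_Icc.prod isCompact_Icc).exists_bound_of_continuousOn
    hf.continuousOn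
  refine Integrable.mono' (integrable_const M) ((hf.measurable.comp hφ).aestronglyMeasurable) ?_
  filter_upwards [ae_restrict_mem measurableSet_Icc] with t ht
  exact hM _ (hmap t ht)

end maps

lemma mapW_mapsto : ∀ t ∈ Icc (0:ℝ) 1, (t, 1 - t) ∈ Icc (0:ℝ) 1 ×ˢ Icc (0:ℝ) 1 := by
  intro t ht
  simp only [mem_prod, mem_Icc] at ht ⊢
  constructor <;> constructor <;> linarith [ht.1, ht.2]

lemma mapS_mapsto {th : ℝ} (ht0 : 0 ≤ th) (ht1 : th ≤ 1/2) :
    ∀ t ∈ Icc (0:ℝ) 1, (t, gmap th t) ∈ Icc (0:ℝ) 1 ×ˢ Icc (0:ℝ) 1 := by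
  intro t ht
  simp only [mem_Icc] at ht
  by_cases hc : t ≤ 1 - th
  · simp only [mem_prod, mem_Icc, gmap, if_pos hc]
    refine ⟨⟨ht.1, ht.2⟩, by linarith [ht.1], by linarith⟩
  · push_neg at hc
    simp only [mem_prod, mem_Icc, gmap, if_neg (not_le.mpr hc)]
    refine ⟨⟨ht.1, ht.2⟩, by linarith, by linarith [ht.2]⟩


variable {a th : ℝ}

lemma mu_int (ha0 : 0 ≤ a) (ha1 : a ≤ 1) (ht0 : 0 ≤ th) (ht1 : th ≤ 1/2) :
    ∫ p in Icc (0:ℝ) 1 ×ˢ Icc (0:ℝ) 1, Cop a th p.1 p.2 ∂(Mu a th)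
      = (1 - a) * (((1 - th)^2 + th^2) / 2) := by
  have h1a : (0:ℝ) ≤ 1 - a := by linarith
  have hfc : Continuous fun p : ℝ × ℝ => Cop a th p.1 p.2 := cop_cont a th
  have i1 : IntegrableOn (fun p : ℝ × ℝ => Cop a th p.1 p.2)
      (Icc (0:ℝ) 1 ×ˢ Icc (0:ℝ) 1) (ENNReal.ofReal a • muW) := by
    rw [IntegrableOn, Measure.restrict_smul]
    exact ((map_integrableOn mapW_meas mapW_mapsto hfc)).smul_measure ENNReal.ofReal_ne_top
  have i2 : IntegrableOn (fun p : ℝ × ℝ => Cop a th p.1 p.2)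
      (Icc (0:ℝ) 1 ×ˢ Icc (0:ℝ) 1) (ENNReal.ofReal (1 - a) • muS th) := by
    rw [IntegrableOn, Measure.restrict_smul]
    exact ((map_integrableOn (mapS_meas th) (mapS_mapsto ht0 ht1) hfc)).smul_measure
      ENNReal.ofReal_ne_top
  rw [Mu, Measure.restrict_add, integral_add_measure i1 i2,
    Measure.restrict_smul, Measure.restrict_smul, integral_smul_measure, integral_smul_measure,
    ENNReal.toReal_ofReal ha0, ENNReal.toReal_ofReal h1a]
  have A : (∫ p in Icc (0:ℝ) 1 ×ˢ Icc (0:ℝ) 1, Cop a th p.1 p.2 ∂muW)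
      = (1 - a) * (((1 - th)^2 + th^2) / 4) := by
    rw [muW, map_setInt mapW_meas mapW_mapsto hfc]
    rw [integral_Icc_eq_integral_Ioc, ← intervalIntegral.integral_of_le zero_le_one]
    exact antidiag_int ha0 ha1 ht0 ht1
  have B : (∫ p in Icc (0:ℝ) 1 ×ˢ Icc (0:ℝ) 1, Cop a th p.1 p.2 ∂muS th)
      = a * (((1 - th)^2 + th^2) / 4) + (1 - a) * (((1 - th)^2 + th^2) / 2) := by
    rw [muS, map_setInt (mapS_meas th) (mapS_mapsto ht0 ht1) hfc]
    have hsplit : Icc (0:ℝ) 1 = Icc 0 (1 - th) ∪ Ioc (1 - th) 1 :=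
      (Icc_union_Ioc_eq_Icc (by linarith) (by linarith)).symm
    have hdisj : Disjoint (Icc (0:ℝ) (1 - th)) (Ioc (1 - th) 1) := by
      apply Set.disjoint_left.mpr
      intro x hx hx2
      exact absurd hx.2 (not_le.mpr hx2.1)
    have eq1 : EqOn (fun t => Cop a th t (t + th)) (fun t => Cop a th t (gmap th t))
        (Icc (0:ℝ) (1 - th)) := by
      intro t ht
      simp only [gmap, if_pos ht.2]
    have eq2 : EqOn (fun t => Cop a th t (t + th - 1)) (fun t => Cop a th t (gmap th t))
        (Ioc (1 - th) 1) := by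
      intro t ht
      simp only [gmap, if_neg (not_le.mpr ht.1)]
    have int1 : IntegrableOn (fun t => Cop a th t (gmap th t)) (Icc (0:ℝ) (1 - th)) volume :=
      IntegrableOn.congr_fun (Continuous.integrableOn_Icc (by unfold Cop; fun_prop))
        eq1 measurableSet_Icc
    have int2 : IntegrableOn (fun t => Cop a th t (gmap th t)) (Ioc (1 - th) (1:ℝ)) volume := by
      refine IntegrableOn.congr_fun ?_ eq2 measurableSet_Ioc
      exact (Continuous.integrableOn_Icc (by unfold Cop; fun_prop)).mono_set Ioc_subset_Icc_self
    rw [hsplit, setIntegral_union hdisj measurableSet_Ioc int1 int2,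
      ← setIntegral_congr_fun measurableSet_Icc eq1,
      ← setIntegral_congr_fun measurableSet_Ioc eq2,
      integral_Icc_eq_integral_Ioc, ← intervalIntegral.integral_of_le (by linarith : (0:ℝ) ≤ 1 - th),
      ← intervalIntegral.integral_of_le (by linarith : (1:ℝ) - th ≤ 1),
      shift1_int ha0 ha1 ht0 ht1, shift2_int ha0 ha1 ht0 ht1]
    ring
  rw [A, B]
  simp only [smul_eq_mul]
  ring

lemma master (ha0 : 0 ≤ a) (ha1 : a ≤ 1) (ht0 : 0 ≤ th) (ht1 : th ≤ 1/2) :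
    IsCopula (Cop a th) ∧ IsCopulaMeasure (Cop a th) (Mu a th) ∧
      footrule (Cop a th) = 3*a/2 + 3 * ((1 - a) * ((1 - th)^2 + th^2)) - 2 ∧
      giniGamma (Cop a th) = a + 3 * ((1 - a) * ((1 - th)^2 + th^2)) - 2 ∧
      kendallTauInt (Cop a th) (Mu a th) = 2 * ((1 - a) * ((1 - th)^2 + th^2)) - 1 := by
  refine ⟨cop_isCopula ha0 ha1 ht0 ht1, Mu_isCopulaMeasure ha0 ha1 ht0 ht1, ?_, ?_, ?_⟩
  · rw [footrule, diag_int ha0 ha1 ht0 ht1]; ring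
  · rw [giniGamma, diag_int ha0 ha1 ht0 ht1]
    have : (∫ u in (0:ℝ)..1, Cop a th u (1 - u)) = (1 - a) * (((1-th)^2 + th^2) / 4) :=
      antidiag_int ha0 ha1 ht0 ht1
    rw [this]; ring
  · rw [kendallTauInt, mu_int ha0 ha1 ht0 ht1]; ring

/-- Every point of the face F₃ is attained. -/
theorem exists_copula_face_F3 (φ₀ γ₀ τ₀ : ℝ)
    (h1 : -(1/2) ≤ φ₀) (h2 : φ₀ ≤ 1)
    (h3 : (4/3) * φ₀ - 1/3 ≤ γ₀) (h4 : γ₀ ≤ φ₀)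
    (h5 : τ₀ = -(4/3) * φ₀ + 2 * γ₀ + 1/3) :
    ∃ (C : ℝ → ℝ → ℝ) (μ : Measure (ℝ × ℝ)), IsCopula C ∧ IsCopulaMeasure C μ ∧
      footrule C = φ₀ ∧ giniGamma C = γ₀ ∧ kendallTauInt C μ = τ₀ := by
  have hα0 : (0:ℝ) ≤ 2*(φ₀ - γ₀) := by linarith
  have hα1 : 2*(φ₀ - γ₀) ≤ 1 := by linarith
  rcases eq_or_lt_of_le hα1 with heq | hlt
  · -- α = 1, so necessarily φ₀ = -1/2, γ₀ = -1 ; take θ = 0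
    have hφ : φ₀ = -(1/2) := by linarith
    have hγ : γ₀ = -1 := by linarith
    obtain ⟨hc, hm, hf, hg, ht⟩ := master hα0 hα1 le_rfl (by norm_num : (0:ℝ) ≤ 1/2)
      (a := 2*(φ₀ - γ₀)) (th := 0)
    refine ⟨_, _, hc, hm, ?_, ?_, ?_⟩
    · rw [hf]; rw [hφ, hγ] at *; norm_num
    · rw [hg]; rw [hφ, hγ] at *; norm_num
    · rw [ht, h5]; rw [hφ, hγ] at *; norm_num
  · -- α < 1
    set α := 2*(φ₀ - γ₀) with hαdef
    have h1α : (0:ℝ) < 1 - α := by linarith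
    set K := (2 - 2*φ₀ + 3*γ₀)/3 with hKdef
    set q := 2*K/(1-α) - 1 with hqdef
    have hq0 : 0 ≤ q := by
      rw [hqdef, sub_nonneg, le_div_iff₀ h1α]
      rw [hKdef, hαdef]; ring_nf; linarith
    have hq1 : q ≤ 1 := by
      rw [hqdef, sub_le_iff_le_add, div_le_iff₀ h1α]
      rw [hKdef, hαdef]; ring_nf; linarith
    have hs0 : 0 ≤ Real.sqrt q := Real.sqrt_nonneg q
    have hs1 : Real.sqrt q ≤ 1 := Real.sqrt_le_one.mpr hq1
    have hsq : Real.sqrt q ^ 2 = q := Real.sq_sqrt hq0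
    set θ := (1 - Real.sqrt q)/2 with hθdef
    have hθ0 : 0 ≤ θ := by rw [hθdef]; linarith
    have hθ1 : θ ≤ 1/2 := by rw [hθdef]; linarith
    have hE : (1 - θ)^2 + θ^2 = (1 + q)/2 := by
      rw [hθdef]; field_simp; nlinarith [hsq]
    have hX : (1 - α) * ((1 - θ)^2 + θ^2) = K := by
      rw [hE, hqdef]; field_simp; ring
    obtain ⟨hc, hm, hf, hg, ht⟩ := master hα0 (le_of_lt hlt) hθ0 hθ1
    refine ⟨_, _, hc, hm, ?_, ?_, ?_⟩
    · rw [hf, hX, hKdef, hαdef]; ring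
    · rw [hg, hX, hKdef, hαdef]; ring
    · rw [ht, hX, hKdef, h5]; ring
end

section
/- For every triple (φ₀, γ₀, τ₀) ∈ Ω satisfying φ₀ = −1/2 (i.e., every point on the face F₁ of the polyhedron Ω), there exists a copula C together with a copula measure μ of C such that φ(C) = φ₀, γ(C) = γ₀, and 4·∫_{[0,1]²} C dμ − 1 = τ₀. -/
/-!
Take for `C` the distribution function `C(u, v) = μ([0, u] × [0, v])` of the probability measure
`μ` that puts mass `s` uniformly on the two segments of the lines `y = x ± 1/2` and mass `1 - s`
uniformly on the four segments of the lines `x + y = (1 + l)/2` and `x + y = 1 + l/2` inside the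
off-diagonal squares `[0, 1/2] × [1/2, 1]` and `[1/2, 1] × [0, 1/2]`. Its marginals are uniform,
so `C` is a copula, 2-increasing because `μ` is a measure. As `μ` lives on the off-diagonal
squares, `C(u, u) = max (2u - 1) 0` is the lower Fréchet bound on the diagonal, whence
`φ(C) = -1/2` for all `s` and `l`. Integrating the piecewise linear `C` along the antidiagonal and
along the six segments gives `γ(C) = s/2 + 2(1 - s) l (1 - l) - 1` and
`τ(C) = s + 2(1 - s) l (1 - l) - 1`. A point `(-1/2, γ, τ)` of `Ω` is reached with
`s = 2(τ - γ)` and `l ∈ [0, 1/2]` given by the intermediate value theorem for `l (1 - l)`.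
-/

open MeasureTheory Set

lemma measureReal_prod_sub_nonneg {μ : Measure (ℝ × ℝ)} [IsFiniteMeasure μ]
    {A₁ A₂ B₁ B₂ : Set ℝ} (hA₁ : MeasurableSet A₁) (hB₂ : MeasurableSet B₂)
    (hA : A₁ ⊆ A₂) (hB : B₁ ⊆ B₂) :
    0 ≤ μ.real (A₂ ×ˢ B₂) - μ.real (A₂ ×ˢ B₁) - μ.real (A₁ ×ˢ B₂) + μ.real (A₁ ×ˢ B₁) := by
  have h := measureReal_union_add_inter (μ := μ) (s := A₂ ×ˢ B₁) (hA₁.prod hB₂)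
  rw [prod_inter_prod, inter_eq_right.2 hA, inter_eq_left.2 hB] at h
  have : μ.real (A₂ ×ˢ B₁ ∪ A₁ ×ˢ B₂) ≤ μ.real (A₂ ×ˢ B₂) :=
    measureReal_mono (union_subset (prod_mono le_rfl hB) (prod_mono hA le_rfl))
  linarith

lemma kendallTauInt_eq_integral {C : ℝ → ℝ → ℝ} {μ : Measure (ℝ × ℝ)}
    (h : IsCopulaMeasure C μ) (h₁₁ : C 1 1 = 1) :
    kendallTauInt C μ = 4 * (∫ p, C p.1 p.2 ∂μ) - 1 := by
  obtain ⟨_, hrect⟩ := h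
  have hS : μ (Icc 0 1 ×ˢ Icc 0 1) = 1 := by
    rw [hrect 1 ⟨zero_le_one, le_rfl⟩ 1 ⟨zero_le_one, le_rfl⟩, h₁₁, ENNReal.ofReal_one]
  rw [kendallTauInt, Measure.restrict_eq_self_of_ae_mem]
  exact (prob_compl_eq_zero_iff (measurableSet_Icc.prod measurableSet_Icc)).2 hS

lemma integral_eq_of_eqOn_affine {f : ℝ → ℝ} {a b : ℝ} (c d : ℝ) (hab : a ≤ b)
    (hf : EqOn f (fun x => c * x + d) (Icc a b)) :
    ∫ x in a..b, f x = c * (b ^ 2 - a ^ 2) / 2 + d * (b - a) := by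
  rw [intervalIntegral.integral_congr (hf.mono (uIcc_of_le hab).subset),
    intervalIntegral.integral_add ((continuous_const_mul c).intervalIntegrable a b)
    intervalIntegrable_const, intervalIntegral.integral_const_mul, integral_id,
    intervalIntegral.integral_const, smul_eq_mul]
  ring

lemma integral_zero_one_eq_two_mul_of_symm {f : ℝ → ℝ} (hf : Continuous f)
    (hsymm : ∀ x, f (1 - x) = f x) : ∫ x in (0:ℝ)..1, f x = 2 * ∫ x in (0:ℝ)..1/2, f x := by
  have h : ∫ x in (1/2:ℝ)..1, f x = ∫ x in (0:ℝ)..1/2, f x := by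
    calc ∫ x in (1/2:ℝ)..1, f x = ∫ x in (1/2:ℝ)..1, f (1 - x) :=
          intervalIntegral.integral_congr fun x _ => (hsymm x).symm
      _ = ∫ x in (0:ℝ)..1/2, f x := by
          rw [intervalIntegral.integral_comp_sub_left f]; norm_num
  rw [← intervalIntegral.integral_add_adjacent_intervals (hf.intervalIntegrable 0 (1/2))
    (hf.intervalIntegrable (1/2) 1), h, two_mul]

noncomputable def risingLength (a b c u v : ℝ) : ℝ := max 0 (min (min b u) (v - c) - a)
noncomputable def fallingLength (a b c u v : ℝ) : ℝ := max 0 (min b u - max a (c - v))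

noncomputable def segmentMeasure (f : ℝ → ℝ × ℝ) (a b : ℝ) : Measure (ℝ × ℝ) :=
  (volume.restrict (Icc a b)).map f

section SegmentMeasure

variable {f : ℝ → ℝ × ℝ} {a b : ℝ}

instance (f : ℝ → ℝ × ℝ) (a b : ℝ) : IsFiniteMeasure (segmentMeasure f a b) := by
  unfold segmentMeasure; infer_instance

lemma segmentMeasure_apply (hf : Measurable f) {S : Set (ℝ × ℝ)} (hS : MeasurableSet S) :
    segmentMeasure f a b S = volume (f ⁻¹' S ∩ Icc a b) := by
  rw [segmentMeasure, Measure.map_apply hf hS, Measure.restrict_apply (hf hS)]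

lemma segmentMeasure_real_univ (hf : Measurable f) (hab : a ≤ b) :
    (segmentMeasure f a b).real univ = b - a := by
  simp [measureReal_def, segmentMeasure_apply hf MeasurableSet.univ, hab]

lemma segmentMeasure_real_Icc_prod_Icc_rising {c : ℝ} (ha : 0 ≤ a) (hac : 0 ≤ a + c) (u v : ℝ) :
    (segmentMeasure (fun t => (t, t + c)) a b).real (Icc 0 u ×ˢ Icc 0 v) =
      risingLength a b c u v := by
  have : (fun t => (t, t + c)) ⁻¹' (Icc 0 u ×ˢ Icc 0 v) ∩ Icc a b =
      Icc a (min (min b u) (v - c)) := by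
    ext t
    simp only [mem_inter_iff, mem_preimage, mem_prod, mem_Icc, le_min_iff]
    grind
  rw [measureReal_def,
    segmentMeasure_apply (by fun_prop) (measurableSet_Icc.prod measurableSet_Icc),
    this, Real.volume_Icc, ENNReal.toReal_ofReal', risingLength, max_comm]

lemma segmentMeasure_real_Icc_prod_Icc_falling {c : ℝ} (ha : 0 ≤ a) (hbc : b ≤ c) (u v : ℝ) :
    (segmentMeasure (fun t => (t, c - t)) a b).real (Icc 0 u ×ˢ Icc 0 v) =
      fallingLength a b c u v := by
  have : (fun t => (t, c - t)) ⁻¹' (Icc 0 u ×ˢ Icc 0 v) ∩ Icc a b =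
      Icc (max a (c - v)) (min b u) := by
    ext t
    simp only [mem_inter_iff, mem_preimage, mem_prod, mem_Icc, le_min_iff, max_le_iff]
    grind
  rw [measureReal_def,
    segmentMeasure_apply (by fun_prop) (measurableSet_Icc.prod measurableSet_Icc),
    this, Real.volume_Icc, ENNReal.toReal_ofReal', fallingLength, max_comm]

lemma integrable_segmentMeasure {F : ℝ × ℝ → ℝ} (hF : Continuous F) (hf : Continuous f) :
    Integrable F (segmentMeasure f a b) :=
  (integrable_map_measure hF.aestronglyMeasurable hf.aemeasurable).2
    (hF.comp hf).integrableOn_Icc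

lemma integral_segmentMeasure {F : ℝ × ℝ → ℝ} (hF : Continuous F) (hf : Continuous f)
    (hab : a ≤ b) : ∫ p, F p ∂(segmentMeasure f a b) = ∫ t in a..b, F (f t) := by
  rw [segmentMeasure, integral_map hf.aemeasurable hF.aestronglyMeasurable,
    intervalIntegral.integral_of_le hab, integral_Icc_eq_integral_Ioc]

end SegmentMeasure

noncomputable def symmetrize (ν : Measure (ℝ × ℝ)) : Measure (ℝ × ℝ) := ν + ν.map Prod.swap

section Symmetrize

variable {ν : Measure (ℝ × ℝ)}

instance [IsFiniteMeasure ν] : IsFiniteMeasure (symmetrize ν) := by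
  unfold symmetrize; infer_instance

lemma symmetrize_real_univ [IsFiniteMeasure ν] : (symmetrize ν).real univ = 2 * ν.real univ := by
  rw [symmetrize, measureReal_add_apply, map_measureReal_apply measurable_swap MeasurableSet.univ,
    preimage_univ, two_mul]

lemma symmetrize_real_prod [IsFiniteMeasure ν] {A B : Set ℝ} (hA : MeasurableSet A)
    (hB : MeasurableSet B) :
    (symmetrize ν).real (A ×ˢ B) = ν.real (A ×ˢ B) + ν.real (B ×ˢ A) := by
  rw [symmetrize, measureReal_add_apply, map_measureReal_apply measurable_swap (hA.prod hB),
    preimage_swap_prod]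

lemma integrable_map_swap {F : ℝ × ℝ → ℝ} (hF : Integrable F ν) (hFs : ∀ p, F p.swap = F p)
    (hFm : Measurable F) : Integrable F (ν.map Prod.swap) :=
  (integrable_map_measure hFm.aestronglyMeasurable measurable_swap.aemeasurable).2
    (by simpa only [Function.comp_def, hFs] using hF)

lemma integrable_symmetrize {F : ℝ × ℝ → ℝ} (hF : Integrable F ν) (hFs : ∀ p, F p.swap = F p)
    (hFm : Measurable F) : Integrable F (symmetrize ν) :=
  hF.add_measure (integrable_map_swap hF hFs hFm)

lemma integral_symmetrize {F : ℝ × ℝ → ℝ} (hF : Integrable F ν) (hFs : ∀ p, F p.swap = F p)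
    (hFm : Measurable F) : ∫ p, F p ∂(symmetrize ν) = 2 * ∫ p, F p ∂ν := by
  rw [symmetrize, integral_add_measure hF (integrable_map_swap hF hFs hFm),
    integral_map measurable_swap.aemeasurable hFm.aestronglyMeasurable]
  simp only [hFs, two_mul]

end Symmetrize

noncomputable def faceCopula (s l u v : ℝ) : ℝ :=
  s * (risingLength 0 (1/2) (1/2) u v + risingLength 0 (1/2) (1/2) v u) +
    (1 - s) * (fallingLength 0 (l/2) ((1+l)/2) u v + fallingLength 0 (l/2) ((1+l)/2) v u +
      fallingLength (l/2) (1/2) (1 + l/2) u v + fallingLength (l/2) (1/2) (1 + l/2) v u)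

noncomputable def faceMeasure (s l : ℝ) : Measure (ℝ × ℝ) :=
  s.toNNReal • symmetrize (segmentMeasure (fun t => (t, t + 1/2)) 0 (1/2)) +
    (1 - s).toNNReal • (symmetrize (segmentMeasure (fun t => (t, (1+l)/2 - t)) 0 (l/2)) +
      symmetrize (segmentMeasure (fun t => (t, 1 + l/2 - t)) (l/2) (1/2)))

section FaceCopula

variable {s l : ℝ}

instance : IsFiniteMeasure (faceMeasure s l) := by
  unfold faceMeasure; infer_instance

lemma faceMeasure_real_Icc_prod_Icc (hs₀ : 0 ≤ s) (hs₁ : s ≤ 1) (hl₀ : 0 ≤ l) (u v : ℝ) :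
    (faceMeasure s l).real (Icc 0 u ×ˢ Icc 0 v) = faceCopula s l u v := by
  simp (disch := finiteness) only [faceMeasure, measureReal_add_apply,
    measureReal_nnreal_smul_apply, symmetrize_real_prod measurableSet_Icc measurableSet_Icc,
    Real.coe_toNNReal _ hs₀, Real.coe_toNNReal _ (sub_nonneg.2 hs₁),
    segmentMeasure_real_Icc_prod_Icc_rising le_rfl (by norm_num : (0:ℝ) ≤ 0 + 1/2),
    segmentMeasure_real_Icc_prod_Icc_falling le_rfl (by linarith : l/2 ≤ (1+l)/2),
    segmentMeasure_real_Icc_prod_Icc_falling (by linarith : 0 ≤ l/2)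
      (by linarith : (1:ℝ)/2 ≤ 1 + l/2)]
  rw [faceCopula]
  ring

lemma isProbabilityMeasure_faceMeasure (hs₀ : 0 ≤ s) (hs₁ : s ≤ 1) (hl₀ : 0 ≤ l) (hl₁ : l ≤ 1/2) :
    IsProbabilityMeasure (faceMeasure s l) := by
  have : (faceMeasure s l).real univ = 1 := by
    simp (disch := finiteness) only [faceMeasure, measureReal_add_apply,
      measureReal_nnreal_smul_apply, symmetrize_real_univ, Real.coe_toNNReal _ hs₀,
      Real.coe_toNNReal _ (sub_nonneg.2 hs₁),
      segmentMeasure_real_univ (f := fun t => (t, t + 1/2)) (by fun_prop)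
        (by norm_num : (0:ℝ) ≤ 1/2),
      segmentMeasure_real_univ (f := fun t => (t, (1+l)/2 - t)) (by fun_prop)
        (by linarith : 0 ≤ l/2),
      segmentMeasure_real_univ (f := fun t => (t, 1 + l/2 - t)) (by fun_prop)
        (by linarith : l/2 ≤ 1/2)]
    ring
  exact ⟨by rw [← ofReal_measureReal, this, ENNReal.ofReal_one]⟩

lemma faceCopula_comm (s l u v : ℝ) : faceCopula s l u v = faceCopula s l v u := by
  rw [faceCopula, faceCopula]; ring

@[fun_prop]
lemma Continuous.faceCopula {α : Type*} [TopologicalSpace α] {f g : α → ℝ} (hf : Continuous f)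
    (hg : Continuous g) : Continuous fun x => faceCopula s l (f x) (g x) := by
  unfold _root_.faceCopula risingLength fallingLength; fun_prop

lemma faceCopula_zero_right_and_one_right (hl₀ : 0 ≤ l) (hl₁ : l ≤ 1/2) {u : ℝ}
    (hu : u ∈ Icc (0:ℝ) 1) : faceCopula s l u 0 = 0 ∧ faceCopula s l u 1 = u := by
  obtain ⟨hu₀, hu₁⟩ := hu
  -- `simp` calls its discharger at reducible transparency, where `linarith` fails on these goals.
  rcases le_total u (1/2) with h | h <;>
    [rcases le_total u (l/2) with h' | h'; rcases le_total u ((1+l)/2) with h' | h'] <;>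
    constructor <;>
    simp (disch := with_unfolding_all linarith) only [faceCopula, risingLength, fallingLength,
      min_eq_left, min_eq_right, max_eq_left, max_eq_right] <;>
    ring

lemma isCopula_faceCopula (hs₀ : 0 ≤ s) (hs₁ : s ≤ 1) (hl₀ : 0 ≤ l) (hl₁ : l ≤ 1/2) :
    IsCopula (faceCopula s l) := by
  refine ⟨fun v hv => ?_, fun u hu => (faceCopula_zero_right_and_one_right hl₀ hl₁ hu).1,
    fun u hu => (faceCopula_zero_right_and_one_right hl₀ hl₁ hu).2, fun v hv => ?_, ?_⟩
  · rw [faceCopula_comm]; exact (faceCopula_zero_right_and_one_right hl₀ hl₁ hv).1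
  · rw [faceCopula_comm]; exact (faceCopula_zero_right_and_one_right hl₀ hl₁ hv).2
  · intro u₁ u₂ v₁ v₂ _ hu _ _ hv _
    simp only [← faceMeasure_real_Icc_prod_Icc hs₀ hs₁ hl₀]
    exact measureReal_prod_sub_nonneg measurableSet_Icc measurableSet_Icc
      (Icc_subset_Icc_right hu) (Icc_subset_Icc_right hv)

lemma isCopulaMeasure_faceMeasure (hs₀ : 0 ≤ s) (hs₁ : s ≤ 1) (hl₀ : 0 ≤ l) (hl₁ : l ≤ 1/2) :
    IsCopulaMeasure (faceCopula s l) (faceMeasure s l) :=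
  ⟨isProbabilityMeasure_faceMeasure hs₀ hs₁ hl₀ hl₁, fun u _ v _ => by
    rw [← faceMeasure_real_Icc_prod_Icc hs₀ hs₁ hl₀, ofReal_measureReal]⟩

end FaceCopula

section FaceCopulaIntegrals

variable {s l : ℝ}

lemma integral_faceCopula_diagonal (hl₀ : 0 ≤ l) (hl₁ : l ≤ 1/2) :
    ∫ u in (0:ℝ)..1, faceCopula s l u u = 1/4 := by
  have hi (a b : ℝ) : IntervalIntegrable (fun u => faceCopula s l u u) volume a b :=
    Continuous.intervalIntegrable (by fun_prop) a b
  rw [← intervalIntegral.integral_add_adjacent_intervals (hi 0 (1/2)) (hi (1/2) 1),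
    ← intervalIntegral.integral_add_adjacent_intervals (hi 0 (l/2)) (hi (l/2) (1/2)),
    ← intervalIntegral.integral_add_adjacent_intervals (hi (1/2) ((1+l)/2)) (hi ((1+l)/2) 1),
    integral_eq_of_eqOn_affine 0 0 (by linarith : 0 ≤ l/2) ?_,
    integral_eq_of_eqOn_affine 0 0 (by linarith : l/2 ≤ 1/2) ?_,
    integral_eq_of_eqOn_affine 2 (-1) (by linarith : (1:ℝ)/2 ≤ (1+l)/2) ?_,
    integral_eq_of_eqOn_affine 2 (-1) (by linarith : (1+l)/2 ≤ (1:ℝ)) ?_]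
  · ring
  all_goals
    rintro x ⟨hx₀, hx₁⟩
    simp (disch := with_unfolding_all linarith) only [faceCopula, risingLength, fallingLength,
      min_eq_left, min_eq_right, max_eq_left, max_eq_right]
    ring

lemma integral_faceCopula_antidiagonal (hl₀ : 0 ≤ l) (hl₁ : l ≤ 1/2) :
    ∫ u in (0:ℝ)..1, faceCopula s l u (1 - u) = s/8 + (1 - s) * (l * (1 - l)) / 2 := by
  have hc : Continuous fun u => faceCopula s l u (1 - u) := by fun_prop
  have hi (a b : ℝ) := hc.intervalIntegrable (μ := volume) a b
  rw [integral_zero_one_eq_two_mul_of_symm hc fun u => by rw [sub_sub_cancel, faceCopula_comm],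
    ← intervalIntegral.integral_add_adjacent_intervals (hi 0 (l/2)) (hi (l/2) (1/2)),
    ← intervalIntegral.integral_add_adjacent_intervals (hi (l/2) (1/4)) (hi (1/4) (1/2)),
    ← intervalIntegral.integral_add_adjacent_intervals (hi (1/4) ((1-l)/2)) (hi ((1-l)/2) (1/2)),
    integral_eq_of_eqOn_affine 1 0 (by linarith : 0 ≤ l/2) ?_,
    integral_eq_of_eqOn_affine s ((1 - s) * (l/2)) (by linarith : l/2 ≤ 1/4) ?_,
    integral_eq_of_eqOn_affine (-s) (s/2 + (1 - s) * (l/2)) (by linarith : (1:ℝ)/4 ≤ (1-l)/2) ?_,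
    integral_eq_of_eqOn_affine (-1) (1/2) (by linarith : (1-l)/2 ≤ (1:ℝ)/2) ?_]
  · ring
  all_goals
    rintro x ⟨hx₀, hx₁⟩
    simp (disch := with_unfolding_all linarith) only [faceCopula, risingLength, fallingLength,
      min_eq_left, min_eq_right, max_eq_left, max_eq_right]
    ring

lemma integral_faceCopula_rising (hl₀ : 0 ≤ l) (hl₁ : l ≤ 1/2) :
    ∫ t in (0:ℝ)..1/2, faceCopula s l t (t + 1/2) =
      s/8 + (1 - s) * (1 + 2*l - 2*l^2) / 16 := by
  have hi (a b : ℝ) : IntervalIntegrable (fun t => faceCopula s l t (t + 1/2)) volume a b :=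
    Continuous.intervalIntegrable (by fun_prop) a b
  rw [← intervalIntegral.integral_add_adjacent_intervals (hi 0 (l/2)) (hi (l/2) (1/2)),
    ← intervalIntegral.integral_add_adjacent_intervals (hi 0 (l/4)) (hi (l/4) (l/2)),
    ← intervalIntegral.integral_add_adjacent_intervals (hi (l/2) ((1+l)/4)) (hi ((1+l)/4) (1/2)),
    integral_eq_of_eqOn_affine s 0 (by linarith : 0 ≤ l/4) ?_,
    integral_eq_of_eqOn_affine (2 - s) (-(1 - s) * (l/2)) (by linarith : l/4 ≤ l/2) ?_,
    integral_eq_of_eqOn_affine s ((1 - s) * (l/2)) (by linarith : l/2 ≤ (1+l)/4) ?_,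
    integral_eq_of_eqOn_affine (2 - s) (-(1 - s) / 2) (by linarith : (1+l)/4 ≤ (1:ℝ)/2) ?_]
  · ring
  all_goals
    rintro x ⟨hx₀, hx₁⟩
    simp (disch := with_unfolding_all linarith) only [faceCopula, risingLength, fallingLength,
      min_eq_left, min_eq_right, max_eq_left, max_eq_right]
    ring

lemma integral_faceCopula_falling_lower (hl₀ : 0 ≤ l) (hl₁ : l ≤ 1/2) :
    ∫ t in (0:ℝ)..l/2, faceCopula s l t ((1+l)/2 - t) = s * l^2 / 16 := by
  have hi (a b : ℝ) : IntervalIntegrable (fun t => faceCopula s l t ((1+l)/2 - t)) volume a b :=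
    Continuous.intervalIntegrable (by fun_prop) a b
  rw [← intervalIntegral.integral_add_adjacent_intervals (hi 0 (l/4)) (hi (l/4) (l/2)),
    integral_eq_of_eqOn_affine s 0 (by linarith : 0 ≤ l/4) ?_,
    integral_eq_of_eqOn_affine (-s) (s * (l/2)) (by linarith : l/4 ≤ l/2) ?_]
  · ring
  all_goals
    rintro x ⟨hx₀, hx₁⟩
    simp (disch := with_unfolding_all linarith) only [faceCopula, risingLength, fallingLength,
      min_eq_left, min_eq_right, max_eq_left, max_eq_right]
    ring

lemma integral_faceCopula_falling_upper (hl₀ : 0 ≤ l) (hl₁ : l ≤ 1/2) :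
    ∫ t in l/2..1/2, faceCopula s l t (1 + l/2 - t) =
      s * (1 + 2*l - 3*l^2) / 16 + (1 - s) * (l * (1 - l)) / 4 := by
  have hi (a b : ℝ) : IntervalIntegrable (fun t => faceCopula s l t (1 + l/2 - t)) volume a b :=
    Continuous.intervalIntegrable (by fun_prop) a b
  rw [← intervalIntegral.integral_add_adjacent_intervals (hi (l/2) ((1+l)/4)) (hi ((1+l)/4) (1/2)),
    integral_eq_of_eqOn_affine s ((1 - s) * (l/2)) (by linarith : l/2 ≤ (1+l)/4) ?_,
    integral_eq_of_eqOn_affine (-s) (s * (1/2 + l/2) + (1 - s) * (l/2))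
      (by linarith : (1+l)/4 ≤ (1:ℝ)/2) ?_]
  · ring
  all_goals
    rintro x ⟨hx₀, hx₁⟩
    simp (disch := with_unfolding_all linarith) only [faceCopula, risingLength, fallingLength,
      min_eq_left, min_eq_right, max_eq_left, max_eq_right]
    ring

end FaceCopulaIntegrals

section FaceCopulaValues

variable {s l : ℝ}

lemma integral_faceCopula_faceMeasure (hs₀ : 0 ≤ s) (hs₁ : s ≤ 1) (hl₀ : 0 ≤ l) (hl₁ : l ≤ 1/2) :
    ∫ p, faceCopula s l p.1 p.2 ∂(faceMeasure s l) = (s + 2 * (1 - s) * (l * (1 - l))) / 4 := by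
  have hF : Continuous fun p : ℝ × ℝ => faceCopula s l p.1 p.2 := by fun_prop
  have hsymm (p : ℝ × ℝ) : faceCopula s l p.swap.1 p.swap.2 = faceCopula s l p.1 p.2 :=
    faceCopula_comm _ _ _ _
  have hint {f : ℝ → ℝ × ℝ} (hf : Continuous f) (a b : ℝ) :
      Integrable (fun p : ℝ × ℝ => faceCopula s l p.1 p.2) (symmetrize (segmentMeasure f a b)) :=
    integrable_symmetrize (integrable_segmentMeasure hF hf) hsymm hF.measurable
  rw [faceMeasure, integral_add_measure ((hint (by fun_prop) _ _).smul_measure_nnreal)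
      (((hint (by fun_prop) _ _).add_measure (hint (by fun_prop) _ _)).smul_measure_nnreal),
    integral_smul_nnreal_measure, integral_smul_nnreal_measure,
    integral_add_measure (hint (by fun_prop) _ _) (hint (by fun_prop) _ _),
    integral_symmetrize (integrable_segmentMeasure hF (by fun_prop)) hsymm hF.measurable,
    integral_symmetrize (integrable_segmentMeasure hF (by fun_prop)) hsymm hF.measurable,
    integral_symmetrize (integrable_segmentMeasure hF (by fun_prop)) hsymm hF.measurable,
    integral_segmentMeasure hF (by fun_prop) (by norm_num : (0:ℝ) ≤ 1/2),
    integral_segmentMeasure hF (by fun_prop) (by linarith : 0 ≤ l/2),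
    integral_segmentMeasure hF (by fun_prop) (by linarith : l/2 ≤ 1/2),
    integral_faceCopula_rising hl₀ hl₁, integral_faceCopula_falling_lower hl₀ hl₁,
    integral_faceCopula_falling_upper hl₀ hl₁, NNReal.smul_def, NNReal.smul_def,
    Real.coe_toNNReal _ hs₀, Real.coe_toNNReal _ (sub_nonneg.2 hs₁), smul_eq_mul, smul_eq_mul]
  ring

lemma footrule_faceCopula (hl₀ : 0 ≤ l) (hl₁ : l ≤ 1/2) : footrule (faceCopula s l) = -(1/2) := by
  rw [footrule, integral_faceCopula_diagonal hl₀ hl₁]; norm_num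

lemma giniGamma_faceCopula (hl₀ : 0 ≤ l) (hl₁ : l ≤ 1/2) :
    giniGamma (faceCopula s l) = s/2 + 2 * (1 - s) * (l * (1 - l)) - 1 := by
  rw [giniGamma, integral_faceCopula_diagonal hl₀ hl₁, integral_faceCopula_antidiagonal hl₀ hl₁]
  ring

lemma kendallTauInt_faceCopula (hs₀ : 0 ≤ s) (hs₁ : s ≤ 1) (hl₀ : 0 ≤ l) (hl₁ : l ≤ 1/2) :
    kendallTauInt (faceCopula s l) (faceMeasure s l) = s + 2 * (1 - s) * (l * (1 - l)) - 1 := by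
  rw [kendallTauInt_eq_integral (isCopulaMeasure_faceMeasure hs₀ hs₁ hl₀ hl₁)
    ((isCopula_faceCopula hs₀ hs₁ hl₀ hl₁).2.2.1 1 ⟨zero_le_one, le_rfl⟩),
    integral_faceCopula_faceMeasure hs₀ hs₁ hl₀ hl₁]
  ring

end FaceCopulaValues

lemma exists_faceCopula_parameters {γ τ : ℝ} (hγ : γ ≤ -(1/2)) (hγτ : γ ≤ τ) (hτγ : τ ≤ 1 + 2 * γ) :
    ∃ s l : ℝ, 0 ≤ s ∧ s ≤ 1 ∧ 0 ≤ l ∧ l ≤ 1/2 ∧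
      s/2 + 2 * (1 - s) * (l * (1 - l)) - 1 = γ ∧ s + 2 * (1 - s) * (l * (1 - l)) - 1 = τ := by
  set s := 2 * (τ - γ)
  obtain ⟨l, ⟨hl₀, hl₁⟩, hl⟩ : ∃ l ∈ Icc (0:ℝ) (1/2), 2 * (1 - s) * (l * (1 - l)) = 1 + 2 * γ - τ :=
    intermediate_value_Icc (by norm_num) (by fun_prop)
      ⟨by norm_num; linarith, by norm_num [s]; linarith⟩
  exact ⟨s, l, by linarith, by linarith, hl₀, hl₁, by linarith, by linarith⟩

/-- Every point of the face F₁ = {p ∈ Ω | φ = −1/2} is attained. -/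
theorem exists_copula_face_F1 (p : ℝ × ℝ × ℝ) (hp : p ∈ Omega)
    (hface : p.1 = -(1/2)) :
    ∃ (C : ℝ → ℝ → ℝ) (μ : Measure (ℝ × ℝ)), IsCopula C ∧ IsCopulaMeasure C μ ∧
      footrule C = p.1 ∧ giniGamma C = p.2.1 ∧ kendallTauInt C μ = p.2.2 := by
  obtain ⟨-, h₂, -, -, -, h₆, h₇⟩ := hp
  rw [hface] at h₂ h₆ h₇
  obtain ⟨s, l, hs₀, hs₁, hl₀, hl₁, hγ, hτ⟩ :=
    exists_faceCopula_parameters (γ := p.2.1) (τ := p.2.2) (by linarith) (by linarith) (by linarith)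
  exact ⟨faceCopula s l, faceMeasure s l, isCopula_faceCopula hs₀ hs₁ hl₀ hl₁,
    isCopulaMeasure_faceMeasure hs₀ hs₁ hl₀ hl₁, (footrule_faceCopula hl₀ hl₁).trans hface.symm,
    (giniGamma_faceCopula hl₀ hl₁).trans hγ, (kendallTauInt_faceCopula hs₀ hs₁ hl₀ hl₁).trans hτ⟩
end
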